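/- Let M be an m×m symmetric positive definite matrix with eigenvalues λ_1 ≥ … ≥ λ_m > 0 and orthonormal eigenvectors u_1,…,u_m, let r < m and 0 ≤ ε² < (λ_r + λ_m)/2. Set P = [u_1,…,u_r], L = diag(λ_1 − ε², …, λ_r − ε²). Then ‖PLPᵀ + ε²I − M‖_F² = ∑_{k=r+1}^{m} (λ_k − ε²)², and this is strictly smaller than ∑_{k=r+1}^{m} λ_k² whenever 0 < ε² < 2λ_m. -/

import Mathlib

/-!
With `∑ₖ uₖuₖᵀ = I` the residual is `∑_{k ≥ r} (ε² - λₖ) uₖuₖᵀ`, and for orthonormal `uₖ` the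
squared Frobenius norm of `∑ₖ cₖ uₖuₖᵀ = Uᵀ diag(c) U` is `tr(Uᵀ diag(c)² U) = ∑ₖ cₖ²`.
Finally `(λ - ε²)² < λ²` exactly when `0 < ε² < 2λ`, and `λₖ ≥ λₘ` for every `k`.
-/

open Matrix

/-- Frobenius norm of a real matrix. -/
noncomputable def frob {m n : ℕ} (A : Matrix (Fin m) (Fin n) ℝ) : ℝ :=
  Real.sqrt (∑ i, ∑ j, (A i j) ^ 2)

theorem sum_sq_apply_eq_trace_mul_transpose {m n : Type*} [Fintype m] [Fintype n]
    (A : Matrix m n ℝ) : ∑ i, ∑ j, A i j ^ 2 = trace (A * Aᵀ) := by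
  simp [trace, mul_apply, sq]

theorem sum_smul_add_smul_sum_sub_sum_smul {ι E : Type*} [Fintype ι] [AddCommGroup E]
    [Module ℝ E] (p : ι → Prop) [DecidablePred p] (lam : ι → ℝ) (ε : ℝ) (v : ι → E) :
    (∑ k ∈ Finset.univ.filter p, (lam k - ε) • v k) + ε • ∑ k, v k - ∑ k, lam k • v k =
      ∑ k, (if p k then 0 else ε - lam k) • v k := by
  rw [Finset.sum_filter, Finset.smul_sum, ← Finset.sum_add_distrib, ← Finset.sum_sub_distrib]
  refine Finset.sum_congr rfl fun k _ => ?_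
  split_ifs <;> module

section

variable {ι n : Type*} [Fintype ι] [DecidableEq ι]

theorem sum_smul_vecMulVec_eq_transpose_mul_diagonal_mul (c : ι → ℝ) (u : ι → n → ℝ) :
    ∑ k, c k • vecMulVec (u k) (u k) = (of u)ᵀ * diagonal c * of u := by
  ext i j
  simp only [Matrix.sum_apply, Matrix.smul_apply, vecMulVec_apply, smul_eq_mul, mul_apply,
    transpose_apply, of_apply, diagonal_apply, mul_ite, mul_zero, Finset.sum_ite_eq',
    Finset.mem_univ, ↓reduceIte]
  exact Finset.sum_congr rfl fun k _ => by ring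

theorem sum_sq_apply_sum_smul_vecMulVec [Fintype n] {u : ι → n → ℝ}
    (hu : of u * (of u)ᵀ = 1) (c : ι → ℝ) :
    ∑ i, ∑ j, (∑ k, c k • vecMulVec (u k) (u k)) i j ^ 2 = ∑ k, c k ^ 2 := by
  rw [sum_sq_apply_eq_trace_mul_transpose, sum_smul_vecMulVec_eq_transpose_mul_diagonal_mul]
  calc trace ((of u)ᵀ * diagonal c * of u * ((of u)ᵀ * diagonal c * of u)ᵀ)
      = trace ((of u)ᵀ * (diagonal c * diagonal c) * of u) := by
        simp only [transpose_mul, transpose_transpose, diagonal_transpose, Matrix.mul_assoc]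
        rw [← Matrix.mul_assoc (of u) (of u)ᵀ, hu, Matrix.one_mul]
    _ = trace (of u * (of u)ᵀ * (diagonal c * diagonal c)) := trace_mul_cycle ..
    _ = ∑ k, c k ^ 2 := by simp [hu, sq]

end

theorem sum_vecMulVec_eq_one {n : Type*} [Fintype n] [DecidableEq n] {u : n → n → ℝ}
    (hu : of u * (of u)ᵀ = 1) : ∑ k, vecMulVec (u k) (u k) = 1 := by
  simpa [diagonal_one, mul_eq_one_comm.mp hu] using
    sum_smul_vecMulVec_eq_transpose_mul_diagonal_mul (fun _ => 1) u

theorem nugget_truncation_residual {m : ℕ}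
    (M : Matrix (Fin m) (Fin m) ℝ)
    (lam : Fin m → ℝ) (u : Fin m → Fin m → ℝ)
    (horth : ∀ k l, u k ⬝ᵥ u l = if k = l then (1 : ℝ) else 0)
    (hdecomp : M = ∑ k, lam k • vecMulVec (u k) (u k))
    (hmono : Antitone lam)
    (r : ℕ) (hrm : r < m)
    (ε2 : ℝ) :
    let R := (∑ k ∈ Finset.univ.filter (fun k : Fin m => (k : ℕ) < r),
          (lam k - ε2) • vecMulVec (u k) (u k))
        + ε2 • (1 : Matrix (Fin m) (Fin m) ℝ) - M
    (frob R) ^ 2 =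
        (∑ k ∈ Finset.univ.filter (fun k : Fin m => r ≤ (k : ℕ)), (lam k - ε2) ^ 2) ∧
      (0 < ε2 → ε2 < 2 * lam ⟨m - 1, by omega⟩ →
        (frob R) ^ 2 <
          ∑ k ∈ Finset.univ.filter (fun k : Fin m => r ≤ (k : ℕ)), (lam k) ^ 2) := by
  intro R
  have hu : of u * (of u)ᵀ = 1 := by
    ext k l
    rw [mul_apply', one_apply]
    exact horth k l
  have hR : R = ∑ k : Fin m, (if (k : ℕ) < r then 0 else ε2 - lam k) • vecMulVec (u k) (u k) := by
    rw [← sum_smul_add_smul_sum_sub_sum_smul, sum_vecMulVec_eq_one hu, ← hdecomp]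
  have hfrob : frob R ^ 2 =
      ∑ k ∈ Finset.univ.filter (fun k : Fin m => r ≤ (k : ℕ)), (lam k - ε2) ^ 2 := by
    rw [frob, Real.sq_sqrt (by positivity), hR, sum_sq_apply_sum_smul_vecMulVec hu,
      Finset.sum_filter]
    refine Finset.sum_congr rfl fun k _ => ?_
    split_ifs <;> first | omega | ring
  refine ⟨hfrob, fun hε_pos hε_lt => ?_⟩
  rw [hfrob]
  refine Finset.sum_lt_sum_of_nonempty ⟨⟨r, hrm⟩, by simp⟩ fun k _ => ?_
  have hlam_min : lam ⟨m - 1, by omega⟩ ≤ lam k := hmono (Fin.le_def.mpr (Nat.le_sub_one_of_lt k.isLt))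
  nlinarith
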